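/- arXiv:1609.09327 — 4 statements merged into one kernel-verified Lean document; each statement's English description precedes it below -/
import Mathlib

section
/- Let y, y* ∈ ℝ and ȳ lie in the interval [min(y,y*), max(y,y*)], and suppose |y* - y|² ≤ v for some v > 0. Then for any ε > 0 and C > 0 and all x ∈ ℝ, g(C v, x - ȳ) ≤ (1 + 1/ε)^{1/2} · e^{ε/C} · g(C(1 + 1/ε) v, x - y*), where g(c,u) = (2πc)^{-1/2} exp(-u²/(2c)). -/
/-- Gaussian heat kernel `g(c,u) = (2πc)^{-1/2} exp(-u²/(2c))`. -/
noncomputable def gk (c u : ℝ) : ℝ :=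
  (2 * Real.pi * c) ^ (-(1 : ℝ) / 2) * Real.exp (-u ^ 2 / (2 * c))

/-- Gaussian variance-enlargement lemma: if `ȳ ∈ [min(y,y*), max(y,y*)]` and
`|y* - y|² ≤ v`, then for any `ε, C > 0` and all `x`,
`g(Cv, x - ȳ) ≤ (1+1/ε)^{1/2} e^{ε/C} g(C(1+1/ε)v, x - y*)`. -/
theorem gaussian_intermediate_point (y ystar ybar v ε C x : ℝ)
    (hv : 0 < v) (hε : 0 < ε) (hC : 0 < C)
    (hbar : ybar ∈ Set.Icc (min y ystar) (max y ystar))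
    (hclose : |ystar - y| ^ 2 ≤ v) :
    gk (C * v) (x - ybar)
      ≤ (1 + 1 / ε) ^ ((1 : ℝ) / 2) * Real.exp (ε / C) * gk (C * (1 + 1 / ε) * v) (x - ystar) := by
  have hε' : (0:ℝ) < 1 + 1/ε := by positivity
  have hybar : (ybar - ystar)^2 ≤ v := by
    have h2 : (ybar - ystar)^2 ≤ (ystar - y)^2 := by
      rcases le_total y ystar with h | h
      · simp only [min_eq_left h, max_eq_right h, Set.mem_Icc] at hbar
        nlinarith [hbar.1, hbar.2]
      · simp only [min_eq_right h, max_eq_left h, Set.mem_Icc] at hbar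
        nlinarith [hbar.1, hbar.2]
    calc (ybar - ystar)^2 ≤ (ystar - y)^2 := h2
      _ = |ystar - y|^2 := (sq_abs _).symm
      _ ≤ v := hclose
  have key : (x - ystar)^2 ≤ (1 + 1/ε) * (x - ybar)^2 + (1 + ε) * v := by
    have young : (x - ystar)^2 ≤ (1 + 1/ε) * (x - ybar)^2 + (1 + ε) * (ybar - ystar)^2 := by
      have h0 : 0 ≤ ((x - ybar) - ε * (ybar - ystar))^2 / ε := by positivity
      have h1 : ((x - ybar) - ε * (ybar - ystar))^2 / ε =
          (1/ε) * (x - ybar)^2 - 2 * (x - ybar) * (ybar - ystar) + ε * (ybar - ystar)^2 := by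
        field_simp
        ring
      nlinarith [h0, h1]
    nlinarith [young, hybar, hε]
  have hexp : -(x - ybar)^2 / (2 * (C * v))
      ≤ ε / C + -(x - ystar)^2 / (2 * (C * (1 + 1/ε) * v)) := by
    have hnum : 0 ≤ 2*ε*(1+1/ε)*v - (x - ystar)^2 + (1+1/ε)*(x - ybar)^2 := by
      have h1ε : ε * (1/ε) = 1 := mul_one_div_cancel hε.ne'
      nlinarith [key, hε, hv, h1ε, mul_pos hε hv]
    have heq : ε / C + -(x - ystar)^2 / (2 * (C * (1 + 1/ε) * v))
        - (-(x - ybar)^2 / (2 * (C * v)))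
        = (2*ε*(1+1/ε)*v - (x - ystar)^2 + (1+1/ε)*(x - ybar)^2) / (2 * C * (1+1/ε) * v) := by
      field_simp
      ring
    have hpos : (0:ℝ) < 2 * C * (1+1/ε) * v := by positivity
    have := div_nonneg hnum (le_of_lt hpos)
    linarith [heq ▸ this]
  have hfac : (1 + 1/ε) ^ ((1:ℝ)/2) * (2 * Real.pi * (C * (1 + 1/ε) * v)) ^ (-(1:ℝ)/2)
      = (2 * Real.pi * (C * v)) ^ (-(1:ℝ)/2) := by
    have h1 : 2 * Real.pi * (C * (1 + 1/ε) * v) = (2 * Real.pi * (C * v)) * (1 + 1/ε) := by ring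
    rw [h1, Real.mul_rpow (by positivity) hε'.le]
    rw [mul_comm ((2 * Real.pi * (C * v)) ^ (-(1:ℝ)/2)) _, ← mul_assoc,
      ← Real.rpow_add hε']
    norm_num
  unfold gk
  have hA : (0:ℝ) < (2 * Real.pi * (C * v)) ^ (-(1:ℝ)/2) := by
    apply Real.rpow_pos_of_pos
    positivity
  calc (2 * Real.pi * (C * v)) ^ (-(1:ℝ)/2) * Real.exp (-(x - ybar)^2 / (2 * (C * v)))
      ≤ (2 * Real.pi * (C * v)) ^ (-(1:ℝ)/2) *
        (Real.exp (ε / C) * Real.exp (-(x - ystar)^2 / (2 * (C * (1 + 1/ε) * v)))) := by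
        rw [← Real.exp_add]
        exact mul_le_mul_of_nonneg_left (Real.exp_le_exp.mpr hexp) hA.le
    _ = (1 + 1/ε) ^ ((1:ℝ)/2) * Real.exp (ε / C) *
        ((2 * Real.pi * (C * (1 + 1/ε) * v)) ^ (-(1:ℝ)/2) *
          Real.exp (-(x - ystar)^2 / (2 * (C * (1 + 1/ε) * v)))) := by
        rw [← hfac]; ring
end

section
/- Let a : ℝ → ℝ be measurable with ā⁻¹ ≤ a ≤ ā for positive constants (uniform ellipticity and boundedness), and let q̄^y_t(x,z) = g(a(y)t, z-x) - g(a(y)t, z+x-2L) for x, z ≤ L. Then for any β ∈ [0,1], there exist constants C, c > 1 such that for all x, z ≤ L and t > 0: |q̄^y_t(x,z)| ≤ C · min(|L - z|^β / t^{β/2}, 1) · g(c t, x - z). -/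
open Real

lemma gk_eq {c : ℝ} (hc : 0 < c) (u : ℝ) :
    gk c u = (√(2 * π * c))⁻¹ * exp (-u ^ 2 / (2 * c)) := by
  rw [gk, show (-(1 : ℝ) / 2) = -(1 / 2) by ring, rpow_neg (by positivity), ← sqrt_eq_rpow]

lemma gk_pos {c : ℝ} (hc : 0 < c) (u : ℝ) : 0 < gk c u := by
  rw [gk_eq hc u]
  positivity

lemma gk_neg (c u : ℝ) : gk c (-u) = gk c u := by
  rw [gk, gk, neg_sq]

lemma gk_le_gk_of_sq_le {s u v : ℝ} (hs : 0 < s) (h : u ^ 2 ≤ v ^ 2) : gk s v ≤ gk s u := by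
  rw [gk_eq hs, gk_eq hs, neg_div, neg_div]
  gcongr

lemma gk_le_sqrt_div_mul_gk {s c : ℝ} (hs : 0 < s) (hsc : s ≤ c) (u : ℝ) :
    gk s u ≤ √(c / s) * gk c u := by
  have hc := hs.trans_le hsc
  have hpref : √(c / s) * (√(2 * π * c))⁻¹ = (√(2 * π * s))⁻¹ := by
    rw [← sqrt_inv, ← sqrt_inv, ← sqrt_mul (by positivity)]
    congr 1
    field_simp
  rw [gk_eq hs, gk_eq hc, ← mul_assoc, hpref, neg_div, neg_div]
  gcongr

lemma gk_eq_sqrt_two_mul_exp_mul_gk {s : ℝ} (hs : 0 < s) (w : ℝ) :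
    gk s w = √2 * exp (-w ^ 2 / (4 * s)) * gk (2 * s) w := by
  rw [gk_eq hs, gk_eq (by positivity), show 2 * π * (2 * s) = 2 * (2 * π * s) by ring,
    sqrt_mul zero_le_two, mul_inv,
    show -w ^ 2 / (2 * s) = -w ^ 2 / (4 * s) + -w ^ 2 / (2 * (2 * s)) by ring, exp_add]
  field_simp

lemma abs_mul_exp_neg_sq_le_sqrt {s : ℝ} (hs : 0 < s) (w : ℝ) :
    |w| * exp (-w ^ 2 / (4 * s)) ≤ √s := by
  have hsq : √s * √s = s := mul_self_sqrt hs.le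
  have hpos : 0 < √s := sqrt_pos.2 hs
  rw [neg_div, exp_neg, ← div_eq_mul_inv, div_le_iff₀ (exp_pos _)]
  have amgm : |w| * (4 * s) ≤ √s * (4 * s + w ^ 2) := by
    nlinarith [sq_nonneg (2 * √s - |w|), sq_abs w]
  calc |w| ≤ √s * (1 + w ^ 2 / (4 * s)) := by
        rw [show √s * (1 + w ^ 2 / (4 * s)) = √s * (4 * s + w ^ 2) / (4 * s) by field_simp,
          le_div_iff₀ (by positivity)]
        exact amgm
    _ ≤ √s * exp (w ^ 2 / (4 * s)) := by
        gcongr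
        linarith [add_one_le_exp (w ^ 2 / (4 * s))]

lemma gk_le_sqrt_two_mul_gk {s : ℝ} (hs : 0 < s) (w : ℝ) : gk s w ≤ √2 * gk (2 * s) w := by
  rw [gk_eq_sqrt_two_mul_exp_mul_gk hs]
  have hexp : exp (-w ^ 2 / (4 * s)) ≤ 1 := exp_le_one_iff.2 (by
    rw [neg_div]; exact neg_nonpos.2 (by positivity))
  have hg := gk_pos (by positivity : 0 < 2 * s) w
  gcongr
  exact mul_le_of_le_one_right (sqrt_nonneg 2) hexp

lemma abs_mul_gk_le {s : ℝ} (hs : 0 < s) (w : ℝ) :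
    |w| * gk s w ≤ √2 * √s * gk (2 * s) w := by
  have hg := gk_pos (by positivity : 0 < 2 * s) w
  calc |w| * gk s w = √2 * (|w| * exp (-w ^ 2 / (4 * s))) * gk (2 * s) w := by
        rw [gk_eq_sqrt_two_mul_exp_mul_gk hs]; ring
    _ ≤ √2 * √s * gk (2 * s) w := by gcongr; exact abs_mul_exp_neg_sq_le_sqrt hs w

lemma gk_sub_gk_le {s : ℝ} (hs : 0 < s) (u v : ℝ) :
    gk s u - gk s v ≤ (v ^ 2 - u ^ 2) / (2 * s) * gk s u := by
  set d := (v ^ 2 - u ^ 2) / (2 * s) with hd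
  have hv : gk s v = exp (-d) * gk s u := by
    rw [gk_eq hs, gk_eq hs, mul_left_comm, ← exp_add, hd]
    congr 2
    field_simp
    ring
  rw [hv, ← one_sub_mul]
  gcongr
  · exact (gk_pos hs u).le
  · linarith [add_one_le_exp (-d)]

lemma killed_gk_le {s δ w : ℝ} (hs : 0 < s) (hδ : 0 ≤ δ) :
    gk s w - gk s (w - 2 * δ) ≤ 4 * √2 * min (δ / √s) 1 * gk (2 * s) w := by
  have hg := gk_pos hs w
  have hsq : √s * √s = s := mul_self_sqrt hs.le
  have hsqrt : 0 < √s := sqrt_pos.2 hs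
  rcases le_total δ √s with hnear | hfar
  · rw [min_eq_left ((div_le_one hsqrt).2 hnear)]
    have hgap : ((w - 2 * δ) ^ 2 - w ^ 2) / (2 * s) ≤ 2 * δ / s * (δ + |w|) := by
      rw [div_le_iff₀ (by positivity)]
      field_simp
      nlinarith [neg_le_abs w]
    calc gk s w - gk s (w - 2 * δ) ≤ 2 * δ / s * (δ * gk s w + |w| * gk s w) := by
          refine (gk_sub_gk_le hs _ _).trans ?_
          rw [← add_mul, ← mul_assoc]
          exact mul_le_mul_of_nonneg_right hgap hg.le
      _ ≤ 2 * δ / s * (√s * (√2 * gk (2 * s) w) + √2 * √s * gk (2 * s) w) := by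
          gcongr 2 * δ / s * (?_ + ?_)
          · exact mul_le_mul hnear (gk_le_sqrt_two_mul_gk hs w) hg.le hsqrt.le
          · exact abs_mul_gk_le hs w
      _ = 4 * √2 * (δ / s * √s) * gk (2 * s) w := by ring
      _ = 4 * √2 * (δ / √s) * gk (2 * s) w := by
          congr 2
          rw [div_mul_eq_mul_div, div_eq_div_iff hs.ne' hsqrt.ne', mul_assoc, hsq]
  · rw [min_eq_right ((one_le_div hsqrt).2 hfar)]
    have hg2 := gk_pos (by positivity : 0 < 2 * s) w
    calc gk s w - gk s (w - 2 * δ) ≤ gk s w := by linarith [gk_pos hs (w - 2 * δ)]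
      _ ≤ √2 * gk (2 * s) w := gk_le_sqrt_two_mul_gk hs w
      _ ≤ 4 * √2 * 1 * gk (2 * s) w := by gcongr; linarith [sqrt_nonneg 2]

lemma min_div_le_mul_min {k u : ℝ} (hk : 0 < k) (hu : 0 ≤ u) :
    min (u / k) 1 ≤ (1 / k + 1) * min u 1 := by
  rcases le_total u 1 with hu1 | hu1
  · rw [min_eq_left hu1]
    calc min (u / k) 1 ≤ u / k := min_le_left _ _
      _ ≤ (1 / k + 1) * u := by rw [add_mul, one_div_mul_eq_div]; linarith
  · rw [min_eq_right hu1, mul_one]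
    have : 0 ≤ 1 / k := by positivity
    linarith [min_le_right (u / k) 1]

lemma min_le_min_rpow {r β : ℝ} (hr : 0 ≤ r) (hβ : β ∈ Set.Icc (0 : ℝ) 1) :
    min r 1 ≤ min (r ^ β) 1 := by
  rcases le_total r 1 with hr1 | hr1
  · rw [min_eq_left hr1, min_eq_left (rpow_le_one hr hr1 hβ.1)]
    simpa using rpow_le_rpow_of_exponent_ge' hr hr1 hβ.1 hβ.2
  · rw [min_eq_right hr1, min_eq_right (one_le_rpow hr1 hβ.1)]

lemma div_sqrt_rpow {u t : ℝ} (hu : 0 ≤ u) (ht : 0 ≤ t) (β : ℝ) :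
    (u / √t) ^ β = u ^ β / t ^ (β / 2) := by
  rw [div_rpow hu (sqrt_nonneg t), sqrt_eq_rpow, ← rpow_mul ht, one_div_mul_eq_div]

lemma abs_killed_gk_le {a₁ a₂ σ t L x z : ℝ} (ha₁ : 0 < a₁) (hσ₁ : a₁ ≤ σ) (hσ₂ : σ ≤ a₂)
    (ht : 0 < t) (hx : x ≤ L) (hz : z ≤ L) :
    |gk (σ * t) (z - x) - gk (σ * t) (z + x - 2 * L)|
      ≤ 4 * √2 * (1 / √a₁ + 1) * √((2 * a₂ + 1) / (2 * a₁)) * min ((L - z) / √t) 1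
        * gk ((2 * a₂ + 1) * t) (x - z) := by
  have hσ : 0 < σ := ha₁.trans_le hσ₁
  have ha₂ : 0 < a₂ := hσ.trans_le hσ₂
  have hs : 0 < σ * t := mul_pos hσ ht
  have hδ : 0 ≤ L - z := by linarith
  rw [show z - x = -(x - z) by ring, gk_neg, show z + x - 2 * L = x - z - 2 * (L - z) by ring,
    abs_of_nonneg (sub_nonneg.2 (gk_le_gk_of_sq_le hs (by nlinarith)))]
  have hmin : min ((L - z) / √(σ * t)) 1 ≤ (1 / √a₁ + 1) * min ((L - z) / √t) 1 := by
    refine le_trans ?_ (min_div_le_mul_min (sqrt_pos.2 ha₁) (by positivity))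
    refine min_le_min ?_ le_rfl
    rw [div_div, ← sqrt_mul ht.le, mul_comm t]
    gcongr
  have hgauss : gk (2 * (σ * t)) (x - z)
      ≤ √((2 * a₂ + 1) / (2 * a₁)) * gk ((2 * a₂ + 1) * t) (x - z) := by
    refine (gk_le_sqrt_div_mul_gk (c := (2 * a₂ + 1) * t) (by positivity) (by nlinarith) _).trans
      ?_
    refine mul_le_mul_of_nonneg_right (sqrt_le_sqrt ?_) (gk_pos (by positivity) _).le
    rw [div_le_div_iff₀ (by positivity) (by positivity)]
    nlinarith [mul_le_mul_of_nonneg_left hσ₁ (by positivity : 0 ≤ (2 * a₂ + 1) * t)]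
  calc gk (σ * t) (x - z) - gk (σ * t) (x - z - 2 * (L - z))
      ≤ 4 * √2 * min ((L - z) / √(σ * t)) 1 * gk (2 * (σ * t)) (x - z) := killed_gk_le hs hδ
    _ ≤ 4 * √2 * ((1 / √a₁ + 1) * min ((L - z) / √t) 1)
        * (√((2 * a₂ + 1) / (2 * a₁)) * gk ((2 * a₂ + 1) * t) (x - z)) := by
      gcongr
      exact (gk_pos (by positivity) _).le
    _ = _ := by ring

theorem killed_kernel_boundary_estimate_general (L a₁ a₂ : ℝ) (a : ℝ → ℝ)
    (ha₁ : 0 < a₁)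
    (hell : ∀ y, a₁ ≤ a y ∧ a y ≤ a₂)
    (β : ℝ) (hβ : β ∈ Set.Icc (0 : ℝ) 1) :
    ∃ C c : ℝ, 1 < C ∧ 1 < c ∧
      ∀ y x z t : ℝ, x ≤ L → z ≤ L → 0 < t →
        |gk (a y * t) (z - x) - gk (a y * t) (z + x - 2 * L)|
          ≤ C * min (|L - z| ^ β / t ^ (β / 2)) 1 * gk (c * t) (x - z) := by
  have ha₂ : 0 < a₂ := ha₁.trans_le ((hell 0).1.trans (hell 0).2)
  set K := 4 * √2 * (1 / √a₁ + 1) * √((2 * a₂ + 1) / (2 * a₁))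
  have hK : 0 < K := by positivity
  refine ⟨K + 1, 2 * a₂ + 1, by linarith, by linarith, fun y x z t hx hz ht => ?_⟩
  have hδ : 0 ≤ L - z := by linarith
  calc |gk (a y * t) (z - x) - gk (a y * t) (z + x - 2 * L)|
      ≤ K * min ((L - z) / √t) 1 * gk ((2 * a₂ + 1) * t) (x - z) :=
        abs_killed_gk_le ha₁ (hell y).1 (hell y).2 ht hx hz
    _ ≤ (K + 1) * min (|L - z| ^ β / t ^ (β / 2)) 1 * gk ((2 * a₂ + 1) * t) (x - z) := by
        rw [abs_of_nonneg hδ, ← div_sqrt_rpow hδ ht.le]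
        refine mul_le_mul_of_nonneg_right ?_ (gk_pos (by positivity) _).le
        exact mul_le_mul (by linarith) (min_le_min_rpow (by positivity) hβ)
          (le_min (by positivity) zero_le_one) (by linarith)

/-- For a measurable, bounded and uniformly elliptic diffusion coefficient `a`
and the frozen killed Gaussian kernel
`q̄^y_t(x,z) = g(a(y)t, z-x) - g(a(y)t, z+x-2L)`, for any `β ∈ [0,1]` there are
constants `C, c > 1` with
`|q̄^y_t(x,z)| ≤ C min(|L-z|^β / t^{β/2}, 1) g(ct, x-z)` for all `x, z ≤ L`, `t > 0`. -/
theorem killed_kernel_boundary_estimate (L a₁ a₂ : ℝ) (a : ℝ → ℝ)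
    (ha_meas : Measurable a) (ha₁ : 0 < a₁)
    (hell : ∀ y, a₁ ≤ a y ∧ a y ≤ a₂)
    (β : ℝ) (hβ : β ∈ Set.Icc (0 : ℝ) 1) :
    ∃ C c : ℝ, 1 < C ∧ 1 < c ∧
      ∀ y x z t : ℝ, x ≤ L → z ≤ L → 0 < t →
        |gk (a y * t) (z - x) - gk (a y * t) (z + x - 2 * L)|
          ≤ C * min (|L - z| ^ β / t ^ (β / 2)) 1 * gk (c * t) (x - z) :=
  killed_kernel_boundary_estimate_general L a₁ a₂ a ha₁ hell β hβ
end

section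
/- Let a : ℝ → ℝ be bounded, uniformly elliptic, and η-Hölder continuous for some η ∈ (0,1], and let q̄^y_t(x,z) = g(a(y)t, z-x) - g(a(y)t, z+x-2L) for x,z ≤ L. Then there exists C > 0 such that for all x, z ≤ L and t ∈ (0, T]: ∫_{-∞}^{L} |q̄^z_t(x,z) - q̄^x_t(x,z)| dz ≤ C t^{η/2}. -/
/-!
Both kernels are Gaussians whose variances `a z * t` and `a x * t` lie in `[a₁ t, a₂ t]`. By the
mean value theorem in the variance, `|g(c, u) - g(c', u)| ≤ |c - c'| D_t(u)` with `D_t` a uniform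
bound for `∂_c g` on that interval, and Hölder continuity gives `|c - c'| ≤ K t |z - x|^η`.
For `x, z ≤ L` the image point is farther away, `|z - x| ≤ |z + x - 2L|`, so the integrand is
at most `K t (|u|^η D_t(u))` evaluated at `u = z - x` plus the same at `u = z + x - 2L`, and
the integral is at most `2 K t ∫ |u|^η D_t(u) du`. The parabolic substitution `u = √t v` turns
this last integral into `t^{η/2 - 1} ∫ |v|^η D_1(v) dv`.
-/

open MeasureTheory

open Real Set

lemma integrable_abs_rpow_mul_exp_neg_mul_sq {b s : ℝ} (hb : 0 < b) (hs : -1 < s) :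
    Integrable fun x : ℝ => |x| ^ s * exp (-b * x ^ 2) := by
  have h := integrable_rpow_mul_exp_neg_mul_sq hb hs
  refine (h.norm.add h.comp_neg.norm).mono' (by fun_prop) (ae_of_all _ fun x => ?_)
  have hpow : |x| ^ s ≤ |x ^ s| + |(-x) ^ s| := by
    rcases le_total 0 x with hx | hx
    · rw [abs_of_nonneg hx]; exact le_add_of_le_of_nonneg (le_abs_self _) (abs_nonneg _)
    · rw [abs_of_nonpos hx]; exact le_add_of_nonneg_of_le (abs_nonneg _) (le_abs_self _)
  have he := (exp_pos (-b * x ^ 2)).le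
  simp only [Pi.add_apply, norm_mul, Real.norm_eq_abs, neg_sq, abs_of_nonneg he,
    abs_of_nonneg (rpow_nonneg (abs_nonneg x) s)]
  nlinarith

noncomputable def gkDerivBound (c₁ c₂ u : ℝ) : ℝ :=
  (2 * π * c₁) ^ (-(1 : ℝ) / 2) * exp (-u ^ 2 / (2 * c₂)) * (u ^ 2 / (2 * c₁ ^ 2) + 1 / (2 * c₁))

lemma gkDerivBound_nonneg {c₁ : ℝ} (hc₁ : 0 < c₁) (c₂ u : ℝ) : 0 ≤ gkDerivBound c₁ c₂ u := by
  unfold gkDerivBound; positivity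

lemma integrable_abs_rpow_mul_gkDerivBound {c₁ c₂ η : ℝ} (hc₂ : 0 < c₂) (hη : -1 < η) :
    Integrable fun u => |u| ^ η * gkDerivBound c₁ c₂ u := by
  have hb : 0 < 1 / (2 * c₂) := by positivity
  have hη₂ : -1 < η + (2 : ℕ) := by push_cast; linarith
  have h := ((integrable_abs_rpow_mul_exp_neg_mul_sq hb hη₂).const_mul
      ((2 * π * c₁) ^ (-(1 : ℝ) / 2) / (2 * c₁ ^ 2))).add
    ((integrable_abs_rpow_mul_exp_neg_mul_sq hb hη).const_mul
      ((2 * π * c₁) ^ (-(1 : ℝ) / 2) / (2 * c₁)))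
  refine h.congr (ae_of_all _ fun u => ?_)
  simp only [gkDerivBound, Pi.add_apply]
  rw [rpow_add_natCast' (abs_nonneg u) (by push_cast; linarith), sq_abs]
  rw [show -(1 / (2 * c₂)) * u ^ 2 = -u ^ 2 / (2 * c₂) by ring]
  ring

lemma hasDerivAt_gk_variance (u : ℝ) {c : ℝ} (hc : 0 < c) :
    HasDerivAt (fun c => gk c u) (gk c u * (u ^ 2 / (2 * c ^ 2) - 1 / (2 * c))) c := by
  have h2πc : 0 < 2 * π * c := by positivity
  have hpow : HasDerivAt (fun c : ℝ => (2 * π * c) ^ (-(1 : ℝ) / 2))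
      (-(1 : ℝ) / 2 * (2 * π * c) ^ (-(1 : ℝ) / 2 - 1) * (2 * π)) c :=
    ((hasDerivAt_id' c).const_mul (2 * π)).rpow_const (Or.inl h2πc.ne') |>.congr_deriv
      (by ring)
  have hexp : HasDerivAt (fun c : ℝ => exp (-u ^ 2 / (2 * c)))
      (exp (-u ^ 2 / (2 * c)) * (-u ^ 2 / 2 * -(c ^ 2)⁻¹)) c := by
    have e : ∀ c : ℝ, -u ^ 2 / (2 * c) = -u ^ 2 / 2 * c⁻¹ := fun c => by ring
    simpa only [e] using ((hasDerivAt_inv hc.ne').const_mul (-u ^ 2 / 2)).exp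
  refine (hpow.mul hexp).congr_deriv ?_
  rw [gk, rpow_sub h2πc, rpow_one]
  field_simp
  ring

lemma abs_gk_mul_le_gkDerivBound {c₁ c₂ c : ℝ} (hc₁ : 0 < c₁) (hc : c ∈ Icc c₁ c₂) (u : ℝ) :
    |gk c u * (u ^ 2 / (2 * c ^ 2) - 1 / (2 * c))| ≤ gkDerivBound c₁ c₂ u := by
  have hc₀ : 0 < c := hc₁.trans_le hc.1
  have hgk : gk c u ≤ (2 * π * c₁) ^ (-(1 : ℝ) / 2) * exp (-u ^ 2 / (2 * c₂)) := by
    have hpow : (2 * π * c) ^ (-(1 : ℝ) / 2) ≤ (2 * π * c₁) ^ (-(1 : ℝ) / 2) :=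
      rpow_le_rpow_of_nonpos (by positivity) (by gcongr; exact hc.1) (by norm_num)
    have hexp : exp (-u ^ 2 / (2 * c)) ≤ exp (-u ^ 2 / (2 * c₂)) := by
      rw [exp_le_exp, neg_div, neg_div, neg_le_neg_iff]
      gcongr
      exact hc.2
    exact mul_le_mul hpow hexp (exp_nonneg _) (by positivity)
  have hfac : |u ^ 2 / (2 * c ^ 2) - 1 / (2 * c)| ≤ u ^ 2 / (2 * c₁ ^ 2) + 1 / (2 * c₁) := by
    refine (abs_sub _ _).trans ?_
    rw [abs_of_nonneg (by positivity), abs_of_nonneg (by positivity)]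
    gcongr <;> exact hc.1
  rw [abs_mul, abs_of_nonneg (by unfold gk; positivity)]
  exact mul_le_mul hgk hfac (abs_nonneg _) (by positivity)

lemma abs_gk_sub_le {c₁ c₂ c c' : ℝ} (hc₁ : 0 < c₁) (hc : c ∈ Icc c₁ c₂) (hc' : c' ∈ Icc c₁ c₂)
    (u : ℝ) : |gk c u - gk c' u| ≤ gkDerivBound c₁ c₂ u * |c - c'| := by
  simpa only [Real.norm_eq_abs] using (convex_Icc c₁ c₂).norm_image_sub_le_of_norm_hasDerivWithin_le
    (fun y hy => (hasDerivAt_gk_variance u (hc₁.trans_le hy.1)).hasDerivWithinAt)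
    (fun y hy => by rw [Real.norm_eq_abs]; exact abs_gk_mul_le_gkDerivBound hc₁ hy u) hc' hc

lemma gkDerivBound_mul_sq {c₁ : ℝ} (c₂ : ℝ) {s : ℝ} (hc₁ : 0 ≤ c₁) (hs : 0 < s) (v : ℝ) :
    gkDerivBound (c₁ * s ^ 2) (c₂ * s ^ 2) (s * v) = s⁻¹ ^ 3 * gkDerivBound c₁ c₂ v := by
  have hpow : (2 * π * (c₁ * s ^ 2)) ^ (-(1 : ℝ) / 2) = (2 * π * c₁) ^ (-(1 : ℝ) / 2) * s⁻¹ := by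
    rw [← mul_assoc, mul_rpow (by positivity) (by positivity), ← rpow_natCast,
      ← rpow_mul hs.le]
    norm_num [rpow_neg_one]
  have hexp : -(s * v) ^ 2 / (2 * (c₂ * s ^ 2)) = -v ^ 2 / (2 * c₂) := by
    field_simp
  simp only [gkDerivBound, hpow, hexp]
  field_simp

lemma integral_abs_rpow_mul_gkDerivBound_mul {c₁ : ℝ} (c₂ η : ℝ) {t : ℝ} (hc₁ : 0 ≤ c₁)
    (ht : 0 < t) :
    ∫ u, |u| ^ η * gkDerivBound (c₁ * t) (c₂ * t) u
      = t ^ (η / 2) / t * ∫ v, |v| ^ η * gkDerivBound c₁ c₂ v := by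
  set s := √t
  have hs : 0 < s := sqrt_pos.2 ht
  have hst : s ^ 2 = t := sq_sqrt ht.le
  have hsη : s ^ η = t ^ (η / 2) := by
    rw [show s = t ^ (1 / 2 : ℝ) from sqrt_eq_rpow t, ← rpow_mul ht.le]; ring_nf
  have hcomp := Measure.integral_comp_mul_left
    (fun u => |u| ^ η * gkDerivBound (c₁ * t) (c₂ * t) u) s
  simp only [← hst, gkDerivBound_mul_sq c₂ hc₁ hs, abs_mul, abs_of_pos hs,
    mul_rpow hs.le (abs_nonneg _), abs_inv, smul_eq_mul] at hcomp
  have hpull : ∀ v, s ^ η * |v| ^ η * (s⁻¹ ^ 3 * gkDerivBound c₁ c₂ v)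
      = s ^ η * s⁻¹ ^ 3 * (|v| ^ η * gkDerivBound c₁ c₂ v) := fun v => by ring
  simp only [hpull, integral_const_mul] at hcomp
  rw [← hsη, ← hst, ← mul_right_inj' (inv_ne_zero hs.ne'), ← hcomp]
  field_simp

/-- The kernel `q̄_t(x, z)` of the paper with variance `c = a t`: the Gaussian kernel killed at
`L` by the method of images. -/
noncomputable def killedGk (L c x z : ℝ) : ℝ := gk c (z - x) - gk c (z + x - 2 * L)

lemma abs_sub_le_abs_add_sub_two_mul {L x z : ℝ} (hx : x ≤ L) (hz : z ≤ L) :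
    |z - x| ≤ |z + x - 2 * L| := by
  rw [abs_of_nonpos (by linarith : z + x - 2 * L ≤ 0)]
  exact abs_le.2 ⟨by linarith, by linarith⟩

lemma abs_killedGk_sub_le {L c₁ c₂ c c' x z η M : ℝ} (hc₁ : 0 < c₁) (hc : c ∈ Icc c₁ c₂)
    (hc' : c' ∈ Icc c₁ c₂) (hη : 0 ≤ η) (hM : 0 ≤ M) (hx : x ≤ L) (hz : z ≤ L)
    (hcc' : |c - c'| ≤ M * |z - x| ^ η) :
    |killedGk L c x z - killedGk L c' x z|
      ≤ M * (|z - x| ^ η * gkDerivBound c₁ c₂ (z - x))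
        + M * (|z + x - 2 * L| ^ η * gkDerivBound c₁ c₂ (z + x - 2 * L)) := by
  set y := z + x - 2 * L
  have hreflect : |z - x| ^ η ≤ |y| ^ η :=
    rpow_le_rpow (abs_nonneg _) (abs_sub_le_abs_add_sub_two_mul hx hz) hη
  have hD := gkDerivBound_nonneg hc₁ c₂
  calc |killedGk L c x z - killedGk L c' x z|
      = |(gk c (z - x) - gk c' (z - x)) - (gk c y - gk c' y)| := by
        rw [killedGk, killedGk, sub_sub_sub_comm]
    _ ≤ |gk c (z - x) - gk c' (z - x)| + |gk c y - gk c' y| := abs_sub _ _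
    _ ≤ gkDerivBound c₁ c₂ (z - x) * |c - c'| + gkDerivBound c₁ c₂ y * |c - c'| :=
        add_le_add (abs_gk_sub_le hc₁ hc hc' _) (abs_gk_sub_le hc₁ hc hc' _)
    _ ≤ gkDerivBound c₁ c₂ (z - x) * (M * |z - x| ^ η) + gkDerivBound c₁ c₂ y * (M * |y| ^ η) :=
        add_le_add (mul_le_mul_of_nonneg_left hcc' (hD _))
          (mul_le_mul_of_nonneg_left (hcc'.trans (by gcongr)) (hD _))
    _ = _ := by ring

lemma setIntegral_Iic_le_two_mul_integral {f w : ℝ → ℝ} {L x : ℝ} (hw : Integrable w)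
    (hw₀ : ∀ u, 0 ≤ w u) (hf₀ : ∀ z, 0 ≤ f z) (hf : ∀ z ≤ L, f z ≤ w (z - x) + w (z + x - 2 * L)) :
    ∫ z in Iic L, f z ≤ 2 * ∫ u, w u := by
  simp only [add_sub_assoc] at hf
  have hw₁ : Integrable fun z => w (z - x) := hw.comp_sub_right x
  have hw₂ : Integrable fun z => w (z + (x - 2 * L)) := hw.comp_add_right _
  calc ∫ z in Iic L, f z ≤ ∫ z in Iic L, (w (z - x) + w (z + (x - 2 * L))) :=
        integral_mono_of_nonneg (ae_of_all _ hf₀) (hw₁.add hw₂).integrableOn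
          ((ae_restrict_iff' measurableSet_Iic).2 (ae_of_all _ hf))
    _ ≤ ∫ z, (w (z - x) + w (z + (x - 2 * L))) :=
        setIntegral_le_integral (hw₁.add hw₂) (ae_of_all _ fun z => add_nonneg (hw₀ _) (hw₀ _))
    _ = 2 * ∫ u, w u := by
        rw [integral_add hw₁ hw₂, integral_sub_right_eq_self, integral_add_right_eq_self]
        ring

theorem frozen_kernel_difference_integral_general (L T η K a₁ a₂ : ℝ) (a : ℝ → ℝ)
    (hη : η ∈ Set.Ioc (0 : ℝ) 1) (ha₁ : 0 < a₁)
    (hell : ∀ y, a₁ ≤ a y ∧ a y ≤ a₂) (hK : 0 < K)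
    (hHolder : ∀ x y, |a x - a y| ≤ K * |x - y| ^ η) :
    ∃ C : ℝ, 0 < C ∧ ∀ x ≤ L, ∀ t ∈ Set.Ioc (0 : ℝ) T,
      (∫ z in Set.Iic L,
        |(gk (a z * t) (z - x) - gk (a z * t) (z + x - 2 * L))
          - (gk (a x * t) (z - x) - gk (a x * t) (z + x - 2 * L))|)
        ≤ C * t ^ (η / 2) := by
  have ha₂ : 0 < a₂ := ha₁.trans_le ((hell 0).1.trans (hell 0).2)
  have hI : 0 ≤ ∫ v, |v| ^ η * gkDerivBound a₁ a₂ v :=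
    integral_nonneg fun v => mul_nonneg (by positivity) (gkDerivBound_nonneg ha₁ _ _)
  refine ⟨2 * K * (∫ v, |v| ^ η * gkDerivBound a₁ a₂ v) + 1, by positivity,
    fun x hx t ⟨ht₀, _⟩ => ?_⟩
  have hvar : ∀ y, a y * t ∈ Icc (a₁ * t) (a₂ * t) := fun y =>
    ⟨by gcongr; exact (hell y).1, by gcongr; exact (hell y).2⟩
  have hHolder_t : ∀ z, |a z * t - a x * t| ≤ K * t * |z - x| ^ η := fun z => by
    rw [← sub_mul, abs_mul, abs_of_pos ht₀, mul_right_comm]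
    exact mul_le_mul_of_nonneg_right (hHolder z x) ht₀.le
  calc (∫ z in Iic L, |killedGk L (a z * t) x z - killedGk L (a x * t) x z|)
      ≤ 2 * ∫ u, K * t * (|u| ^ η * gkDerivBound (a₁ * t) (a₂ * t) u) :=
        setIntegral_Iic_le_two_mul_integral
          ((integrable_abs_rpow_mul_gkDerivBound (by positivity) (by linarith [hη.1])).const_mul _)
          (fun u => by have := gkDerivBound_nonneg (mul_pos ha₁ ht₀) (a₂ * t) u; positivity)
          (fun z => abs_nonneg _)
          (fun z hz => abs_killedGk_sub_le (mul_pos ha₁ ht₀) (hvar z) (hvar x) hη.1.le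
            (by positivity) hx hz (hHolder_t z))
    _ = 2 * K * (∫ v, |v| ^ η * gkDerivBound a₁ a₂ v) * t ^ (η / 2) := by
        rw [integral_const_mul, integral_abs_rpow_mul_gkDerivBound_mul a₂ η ha₁.le ht₀]
        field_simp
    _ ≤ (2 * K * (∫ v, |v| ^ η * gkDerivBound a₁ a₂ v) + 1) * t ^ (η / 2) := by
        gcongr; linarith

/-- For a bounded, uniformly elliptic and `η`-Hölder continuous diffusion
coefficient `a`, the killed Gaussian kernels frozen at `z` and at `x` satisfy
`∫_{-∞}^L |q̄^z_t(x,z) - q̄^x_t(x,z)| dz ≤ C t^{η/2}` for all `x ≤ L`, `t ∈ (0,T]`. -/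
theorem frozen_kernel_difference_integral (L T η K a₁ a₂ : ℝ) (a : ℝ → ℝ)
    (hη : η ∈ Set.Ioc (0 : ℝ) 1) (hT : 0 < T) (ha₁ : 0 < a₁)
    (hell : ∀ y, a₁ ≤ a y ∧ a y ≤ a₂) (hK : 0 < K)
    (hHolder : ∀ x y, |a x - a y| ≤ K * |x - y| ^ η) :
    ∃ C : ℝ, 0 < C ∧ ∀ x ≤ L, ∀ t ∈ Set.Ioc (0 : ℝ) T,
      (∫ z in Set.Iic L,
        |(gk (a z * t) (z - x) - gk (a z * t) (z + x - 2 * L))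
          - (gk (a x * t) (z - x) - gk (a x * t) (z + x - 2 * L))|)
        ≤ C * t ^ (η / 2) :=
  frozen_kernel_difference_integral_general L T η K a₁ a₂ a hη ha₁ hell hK hHolder
end

section
/- Let x < L, a > 0 constant, and for 0 < t ≤ t' ≤ T define f(x,t) = (L-x)/(√(2πa) t^{3/2}) exp(-(L-x)²/(2at)). Then for any η ∈ (0, 1/2) there exist constants C, c > 1 such that |f(x,t') - f(x,t)| ≤ C |t' - t|^η ( t'^{-(1+2η)/2} g(ct', L-x) + t^{-(1+2η)/2} g(ct, L-x) ), where g(c,u) = (2πc)^{-1/2} exp(-u²/(2c)). -/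
/-- First-passage (Lévy) density `f(x,t) = (L-x)/(√(2πa) t^{3/2}) exp(-(L-x)²/(2at))`. -/
noncomputable def fden (a L x t : ℝ) : ℝ :=
  (L - x) / (Real.sqrt (2 * Real.pi * a) * t ^ ((3 : ℝ) / 2)) *
    Real.exp (-(L - x) ^ 2 / (2 * a * t))

open Real

lemma le_rpow_mul_rpow_of_le {h t η : ℝ} (hh : 0 ≤ h) (hht : h ≤ t) (hη1 : η ≤ 1) :
    h ≤ h ^ η * t ^ (1 - η) := by
  calc h = h ^ η * h ^ (1 - η) := by
        rw [← rpow_add' hh (by norm_num), add_sub_cancel, rpow_one]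
    _ ≤ h ^ η * t ^ (1 - η) := by gcongr

noncomputable def invPowExp (p β s : ℝ) : ℝ := s ^ (-p) * exp (-(β / s))

section
variable {p q β γ s : ℝ}

lemma invPowExp_nonneg (hs : 0 ≤ s) : 0 ≤ invPowExp p β s := by
  unfold invPowExp; positivity

lemma invPowExp_mul (hs : 0 < s) :
    invPowExp p β s * invPowExp q γ s = invPowExp (p + q) (β + γ) s := by
  unfold invPowExp
  rw [neg_add, rpow_add hs, add_div, neg_add, exp_add]
  ring

lemma invPowExp_mul_rpow (hs : 0 < s) (r : ℝ) :
    invPowExp p β s * s ^ r = invPowExp (p - r) β s := by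
  unfold invPowExp
  rw [mul_right_comm, ← rpow_add hs, neg_sub, sub_eq_neg_add]

lemma invPowExp_le (hp : 0 < p) (hβ : 0 < β) (hs : 0 < s) :
    invPowExp p β s ≤ (p / β) ^ p := by
  set y := β / (p * s) with hy_def
  have hy : 0 < y := by positivity
  have hyk : y ^ p ≤ exp (β / s) := by
    calc y ^ p ≤ exp y ^ p := by gcongr; linarith [add_one_le_exp y]
      _ = exp (β / s) := by rw [← exp_mul, hy_def]; congr 1; field_simp
  have hs' : s ^ (-p) = (p / β) ^ p * y ^ p := by
    rw [← mul_rpow (by positivity) hy.le, rpow_neg hs.le, ← inv_rpow hs.le]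
    congr 1; rw [hy_def]; field_simp
  unfold invPowExp
  rw [hs', exp_neg, mul_assoc]
  refine mul_le_of_le_one_right (by positivity) ?_
  rw [mul_inv_le_iff₀ (exp_pos _), one_mul]
  exact hyk

lemma hasDerivAt_invPowExp (hs : 0 < s) :
    HasDerivAt (invPowExp p β) (β * invPowExp (p + 2) β s - p * invPowExp (p + 1) β s) s := by
  have hpow : HasDerivAt (fun y : ℝ => y ^ (-p)) (-p * s ^ (-p - 1)) s :=
    hasDerivAt_rpow_const (Or.inl hs.ne')
  have hexp : HasDerivAt (fun y : ℝ => exp (-(β / y))) (exp (-(β / s)) * (β / s ^ 2)) s := by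
    have := ((hasDerivAt_inv hs.ne').const_mul β).neg.exp
    convert this using 1
    · ext y; simp [div_eq_mul_inv]
    · simp only [Pi.neg_apply, div_eq_mul_inv]; ring
  refine (hpow.mul hexp).congr_deriv ?_
  unfold invPowExp
  rw [show -(p + 2) = -p + -2 by ring, show -(p + 1) = -p + -1 by ring, sub_eq_add_neg (-p),
    rpow_add hs, rpow_add hs, rpow_neg_one, rpow_neg hs.le 2, rpow_two]
  field_simp
  ring

lemma invPowExp_le_mul_invPowExp {k δ : ℝ} (hk : 0 < k) (hδ : 0 < δ) (hs : 0 < s)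
    (hp : p = k + q) (hβ : β = δ + γ) : invPowExp p β s ≤ (k / δ) ^ k * invPowExp q γ s := by
  rw [hp, hβ, ← invPowExp_mul hs]
  exact mul_le_mul_of_nonneg_right (invPowExp_le hk hδ hs) (invPowExp_nonneg hs.le)

lemma invPowExp_le_of_le_of_two_mul_le {t : ℝ} (hp : 0 ≤ p) (hβ : 0 ≤ β) (ht : 0 < t)
    (hts : t ≤ s) (hst : 2 * s ≤ 3 * t) : invPowExp p β s ≤ invPowExp p (2 * β / 3) t := by
  have hs : 0 < s := ht.trans_le hts
  unfold invPowExp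
  gcongr ?_ * exp ?_
  · exact rpow_le_rpow_of_nonpos ht hts (by linarith)
  · rw [neg_le_neg_iff, div_le_div_iff₀ ht hs]
    nlinarith

lemma abs_sub_invPowExp_le_mul_sub {t t' : ℝ} (hp : 0 ≤ p) (hβ : 0 ≤ β) (ht : 0 < t)
    (htt' : t ≤ t') (ht't : 2 * t' ≤ 3 * t) :
    |invPowExp p β t' - invPowExp p β t|
      ≤ (β * invPowExp (p + 2) (2 * β / 3) t + p * invPowExp (p + 1) (2 * β / 3) t)
        * (t' - t) := by
  have hderiv : ∀ s ∈ Set.Icc t t', HasDerivWithinAt (invPowExp p β)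
      (β * invPowExp (p + 2) β s - p * invPowExp (p + 1) β s) (Set.Icc t t') s :=
    fun s hs => (hasDerivAt_invPowExp (ht.trans_le hs.1)).hasDerivWithinAt
  have hbound : ∀ s ∈ Set.Icc t t', ‖β * invPowExp (p + 2) β s - p * invPowExp (p + 1) β s‖
      ≤ β * invPowExp (p + 2) (2 * β / 3) t + p * invPowExp (p + 1) (2 * β / 3) t := by
    rintro s ⟨hts, hst'⟩
    have hs : 0 < s := ht.trans_le hts
    have h2 := invPowExp_le_of_le_of_two_mul_le (by linarith : 0 ≤ p + 2) hβ ht hts (by linarith)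
    have h1 := invPowExp_le_of_le_of_two_mul_le (by linarith : 0 ≤ p + 1) hβ ht hts (by linarith)
    have h2' := invPowExp_nonneg (p := p + 2) (β := β) hs.le
    have h1' := invPowExp_nonneg (p := p + 1) (β := β) hs.le
    rw [Real.norm_eq_abs, abs_le]
    constructor <;> nlinarith
  simpa [Real.norm_eq_abs, abs_of_nonneg (sub_nonneg.2 htt')] using
    (convex_Icc t t').norm_image_sub_le_of_norm_hasDerivWithin_le hderiv hbound
      (Set.left_mem_Icc.2 htt') (Set.right_mem_Icc.2 htt')

lemma abs_sub_invPowExp_le_of_two_mul_le {b η t t' : ℝ} (hp : 0 ≤ p) (hb : 0 ≤ b)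
    (hβb : 3 * β < 2 * b) (hη1 : η ≤ 1) (ht : 0 < t) (htt' : t ≤ t') (ht't : 2 * t' ≤ 3 * t) :
    |invPowExp p b t' - invPowExp p b t|
      ≤ (b * (3 / 2 / (2 * b / 3 - β)) ^ (3 / 2 : ℝ)
          + p * (1 / 2 / (2 * b / 3 - β)) ^ (1 / 2 : ℝ)) * (t' - t) ^ η
        * invPowExp (p - 1 / 2 + η) β t := by
  set δ := 2 * b / 3 - β with hδ_def
  have hδ : 0 < δ := by linarith
  set w := invPowExp (p - 1 / 2 + η) β t
  have h3 : invPowExp (p + 2 - (1 - η)) (2 * b / 3) t ≤ (3 / 2 / δ) ^ (3 / 2 : ℝ) * w :=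
    invPowExp_le_mul_invPowExp (by norm_num) hδ ht (by ring) (by ring)
  have h1 : invPowExp (p + 1 - (1 - η)) (2 * b / 3) t ≤ (1 / 2 / δ) ^ (1 / 2 : ℝ) * w :=
    invPowExp_le_mul_invPowExp (by norm_num) hδ ht (by ring) (by ring)
  have hh : 0 ≤ t' - t := sub_nonneg.2 htt'
  have hM : 0 ≤ b * invPowExp (p + 2) (2 * b / 3) t + p * invPowExp (p + 1) (2 * b / 3) t := by
    have := invPowExp_nonneg (p := p + 2) (β := 2 * b / 3) ht.le
    have := invPowExp_nonneg (p := p + 1) (β := 2 * b / 3) ht.le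
    positivity
  calc |invPowExp p b t' - invPowExp p b t|
      ≤ (b * invPowExp (p + 2) (2 * b / 3) t + p * invPowExp (p + 1) (2 * b / 3) t) * (t' - t) :=
        abs_sub_invPowExp_le_mul_sub hp hb ht htt' ht't
    _ ≤ (b * invPowExp (p + 2) (2 * b / 3) t + p * invPowExp (p + 1) (2 * b / 3) t)
          * ((t' - t) ^ η * t ^ (1 - η)) :=
        mul_le_mul_of_nonneg_left (le_rpow_mul_rpow_of_le hh (by linarith) hη1) hM
    _ = (t' - t) ^ η * (b * (invPowExp (p + 2) (2 * b / 3) t * t ^ (1 - η))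
          + p * (invPowExp (p + 1) (2 * b / 3) t * t ^ (1 - η))) := by ring
    _ = (t' - t) ^ η * (b * invPowExp (p + 2 - (1 - η)) (2 * b / 3) t
          + p * invPowExp (p + 1 - (1 - η)) (2 * b / 3) t) := by
        rw [invPowExp_mul_rpow ht, invPowExp_mul_rpow ht]
    _ ≤ (t' - t) ^ η
          * (b * ((3 / 2 / δ) ^ (3 / 2 : ℝ) * w) + p * ((1 / 2 / δ) ^ (1 / 2 : ℝ) * w)) := by
        gcongr
    _ = _ := by ring

lemma invPowExp_le_rpow_mul_invPowExp {b η h : ℝ} (hβb : β < b) (hη0 : 0 ≤ η) (hs : 0 < s)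
    (hsh : s ≤ 3 * h) :
    invPowExp p b s
      ≤ 3 ^ η * (1 / 2 / (b - β)) ^ (1 / 2 : ℝ) * h ^ η * invPowExp (p - 1 / 2 + η) β s := by
  set K := (1 / 2 / (b - β)) ^ (1 / 2 : ℝ)
  have hK : 0 ≤ K := by positivity
  have hw := invPowExp_nonneg (p := p - 1 / 2 + η) (β := β) hs.le
  calc invPowExp p b s ≤ K * invPowExp (p - 1 / 2) β s :=
        invPowExp_le_mul_invPowExp (by norm_num) (by linarith) hs (by ring) (by ring)
    _ = K * (invPowExp (p - 1 / 2 + η) β s * s ^ η) := by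
        rw [invPowExp_mul_rpow hs, add_sub_cancel_right]
    _ ≤ K * (invPowExp (p - 1 / 2 + η) β s * (3 * h) ^ η) := by gcongr
    _ = _ := by rw [mul_rpow (by norm_num) (by linarith)]; ring

lemma abs_sub_invPowExp_le_of_le_two_mul_sub {b η t t' : ℝ} (hβb : β < b) (hη0 : 0 ≤ η)
    (ht : 0 < t) (htt' : t ≤ 2 * (t' - t)) :
    |invPowExp p b t' - invPowExp p b t|
      ≤ 3 ^ η * (1 / 2 / (b - β)) ^ (1 / 2 : ℝ) * (t' - t) ^ η
        * (invPowExp (p - 1 / 2 + η) β t' + invPowExp (p - 1 / 2 + η) β t) := by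
  have ht' : 0 < t' := by linarith
  have h' := invPowExp_nonneg (p := p) (β := b) ht'.le
  have h := invPowExp_nonneg (p := p) (β := b) ht.le
  calc |invPowExp p b t' - invPowExp p b t| ≤ invPowExp p b t' + invPowExp p b t :=
        abs_sub_le_iff.2 ⟨by linarith, by linarith⟩
    _ ≤ _ := by
        rw [mul_add]
        gcongr <;> exact invPowExp_le_rpow_mul_invPowExp hβb hη0 (by assumption) (by linarith)

theorem exists_abs_sub_invPowExp_le {b η : ℝ} (hp : 0 ≤ p) (hb : 0 ≤ b) (hβb : 3 * β < 2 * b)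
    (hη0 : 0 ≤ η) (hη1 : η ≤ 1) :
    ∃ C, 0 < C ∧ ∀ t t', 0 < t → t ≤ t' →
      |invPowExp p b t' - invPowExp p b t|
        ≤ C * (t' - t) ^ η
          * (invPowExp (p - 1 / 2 + η) β t' + invPowExp (p - 1 / 2 + η) β t) := by
  have hfar : 0 < b - β := by linarith
  have hnear : 0 < 2 * b / 3 - β := by linarith
  set Cfar := 3 ^ η * (1 / 2 / (b - β)) ^ (1 / 2 : ℝ)
  set Cnear :=
    b * (3 / 2 / (2 * b / 3 - β)) ^ (3 / 2 : ℝ) + p * (1 / 2 / (2 * b / 3 - β)) ^ (1 / 2 : ℝ)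
  have hCfar : 0 < Cfar := by positivity
  have hCnear : 0 ≤ Cnear := by positivity
  refine ⟨Cfar + Cnear, by positivity, fun t t' ht htt' => ?_⟩
  have hw' := invPowExp_nonneg (p := p - 1 / 2 + η) (β := β) (ht.trans_le htt').le
  have hw := invPowExp_nonneg (p := p - 1 / 2 + η) (β := β) ht.le
  have hh : 0 ≤ (t' - t) ^ η := rpow_nonneg (sub_nonneg.2 htt') η
  rcases le_total (2 * t') (3 * t) with hnear | hfar
  · calc _ ≤ Cnear * (t' - t) ^ η * invPowExp (p - 1 / 2 + η) β t :=
          abs_sub_invPowExp_le_of_two_mul_le hp hb hβb hη1 ht htt' hnear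
      _ ≤ _ := by gcongr <;> linarith
  · calc _ ≤ Cfar * (t' - t) ^ η
            * (invPowExp (p - 1 / 2 + η) β t' + invPowExp (p - 1 / 2 + η) β t) :=
          abs_sub_invPowExp_le_of_le_two_mul_sub (by linarith) hη0 ht (by linarith)
      _ ≤ _ := by gcongr; linarith

end

lemma fden_eq_mul_invPowExp (a L x : ℝ) {t : ℝ} (ht : 0 < t) :
    fden a L x t = (L - x) / √(2 * π * a) * invPowExp (3 / 2) ((L - x) ^ 2 / (2 * a)) t := by
  unfold fden invPowExp
  rw [rpow_neg ht.le, div_div, neg_div]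
  field_simp

lemma rpow_mul_gk_eq_mul_invPowExp {c t : ℝ} (hc : 0 < c) (ht : 0 < t) (η u : ℝ) :
    t ^ (-(1 + 2 * η) / 2) * gk (c * t) u
      = (2 * π * c) ^ (-(1 : ℝ) / 2) * invPowExp (1 + η) (u ^ 2 / (2 * c)) t := by
  unfold gk invPowExp
  have hpow : t ^ (-(1 + η)) = t ^ (-(1 + 2 * η) / 2) * t ^ (-(1 : ℝ) / 2) := by
    rw [← rpow_add ht]; ring_nf
  have hexp : -u ^ 2 / (2 * (c * t)) = -(u ^ 2 / (2 * c) / t) := by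
    rw [div_div, neg_div, mul_assoc]
  rw [show 2 * π * (c * t) = 2 * π * c * t by ring, mul_rpow (by positivity) ht.le, hpow, hexp]
  ring

theorem first_passage_density_time_holder_general (a L x T η : ℝ)
    (ha : 0 < a) (hx : x < L) (hη : η ∈ Set.Ioo (0 : ℝ) (1 / 2)) :
    ∃ C c : ℝ, 1 < C ∧ 1 < c ∧
      ∀ t t' : ℝ, 0 < t → t ≤ t' → t' ≤ T →
        |fden a L x t' - fden a L x t|
          ≤ C * |t' - t| ^ η *
            (t' ^ (-(1 + 2 * η) / 2) * gk (c * t') (L - x)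
              + t ^ (-(1 + 2 * η) / 2) * gk (c * t) (L - x)) := by
  obtain ⟨hη0, hη1⟩ := hη
  have hu : 0 < (L - x) ^ 2 := by nlinarith
  set c := 2 * a + 1 with hc_def
  have hβb : 3 * ((L - x) ^ 2 / (2 * c)) < 2 * ((L - x) ^ 2 / (2 * a)) := by
    rw [mul_div_assoc', mul_div_assoc', div_lt_div_iff₀ (by positivity) (by positivity)]
    nlinarith
  obtain ⟨C, hC, hholder⟩ := exists_abs_sub_invPowExp_le (p := 3 / 2) (by norm_num)
    (by positivity) hβb hη0.le (by linarith)
  rw [show (3 / 2 : ℝ) - 1 / 2 + η = 1 + η by ring] at hholder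
  have hA : 0 < (L - x) / √(2 * π * a) := by positivity
  have hκ : 0 < (2 * π * c) ^ (-(1 : ℝ) / 2) := by positivity
  refine ⟨1 + (L - x) / √(2 * π * a) * C / (2 * π * c) ^ (-(1 : ℝ) / 2), c,
    lt_add_of_pos_right 1 (by positivity), by linarith, fun t t' ht htt' _ => ?_⟩
  have ht' : 0 < t' := ht.trans_le htt'
  rw [fden_eq_mul_invPowExp a L x ht', fden_eq_mul_invPowExp a L x ht,
    rpow_mul_gk_eq_mul_invPowExp (by positivity) ht',
    rpow_mul_gk_eq_mul_invPowExp (by positivity) ht,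
    abs_of_nonneg (sub_nonneg.2 htt'), ← mul_sub, abs_mul, abs_of_pos hA, ← mul_add]
  set A := (L - x) / √(2 * π * a)
  set κ := (2 * π * c) ^ (-(1 : ℝ) / 2)
  set w := invPowExp (1 + η) ((L - x) ^ 2 / (2 * c))
  have hw : 0 ≤ w t' + w t := add_nonneg (invPowExp_nonneg ht'.le) (invPowExp_nonneg ht.le)
  calc _ ≤ A * (C * (t' - t) ^ η * (w t' + w t)) := by gcongr; exact hholder t t' ht htt'
    _ = A * C / κ * (t' - t) ^ η * (κ * (w t' + w t)) := by field_simp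
    _ ≤ _ := by gcongr; linarith

/-- Hölder regularity in time of the first-passage density: for `η ∈ (0,1/2)`
there are `C, c > 1` such that for `0 < t ≤ t' ≤ T`,
`|f(x,t') - f(x,t)| ≤ C |t'-t|^η (t'^{-(1+2η)/2} g(ct',L-x) + t^{-(1+2η)/2} g(ct,L-x))`. -/
theorem first_passage_density_time_holder (a L x T η : ℝ)
    (ha : 0 < a) (hx : x < L) (hT : 0 < T) (hη : η ∈ Set.Ioo (0 : ℝ) (1 / 2)) :
    ∃ C c : ℝ, 1 < C ∧ 1 < c ∧
      ∀ t t' : ℝ, 0 < t → t ≤ t' → t' ≤ T →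
        |fden a L x t' - fden a L x t|
          ≤ C * |t' - t| ^ η *
            (t' ^ (-(1 + 2 * η) / 2) * gk (c * t') (L - x)
              + t ^ (-(1 + 2 * η) / 2) * gk (c * t) (L - x)) :=
  first_passage_density_time_holder_general a L x T η ha hx hη
end
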